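/- arXiv:0807.1679 — 3 statements merged into one kernel-verified Lean document; each statement's English description precedes it below -/
import Mathlib

section
/- Let n ≥ 1 and let f : {0,1}^n → ℝ be a nonzero function. Set ρ = (1/n) · log(E[f²]/(E|f|)²). Then E_x Σ_{y∼x} (f(x) − f(y))² ≥ C(ρ) · E[f²] · log(E[f²]/(E|f|)²), where C(x) = (4/x) · (1/2 − √(H⁻¹(log 2 − x)·(1 − H⁻¹(log 2 − x)))) for x ∈ (0, log 2] and C(0) = 2. -/
/-- Expectation of `g` over the uniform measure on the Hamming cube `{0,1}^n`. -/
noncomputable def cubeE (n : ℕ) (g : (Fin n → Bool) → ℝ) : ℝ :=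
  (∑ x : Fin n → Bool, g x) / 2 ^ n

/-- `E_x ∑_{y ∼ x} (f x - f y)^2` on the Hamming cube `{0,1}^n`. -/
noncomputable def cubeD2 (n : ℕ) (f : (Fin n → Bool) → ℝ) : ℝ :=
  cubeE n (fun x => ∑ i : Fin n, (f x - f (Function.update x i (!x i))) ^ 2)

/-- `Ent(f²) = E[f² log f²] - E[f²] log E[f²]` (note `Real.log 0 = 0`). -/
noncomputable def cubeEnt (n : ℕ) (f : (Fin n → Bool) → ℝ) : ℝ :=
  cubeE n (fun x => f x ^ 2 * Real.log (f x ^ 2)) -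
    cubeE n (fun x => f x ^ 2) * Real.log (cubeE n (fun x => f x ^ 2))

/-- The function `C` of the modified inequalities, given an inverse `Hinv`
of the entropy function `H` on `[0,1/2]`: `C 0 = 2` and for `x ≠ 0`,
`C x = (4/x)·(1/2 − √(H⁻¹(log 2 − x)(1 − H⁻¹(log 2 − x))))`. -/
noncomputable def Cfun (Hinv : ℝ → ℝ) (x : ℝ) : ℝ :=
  if x = 0 then 2
  else (4 / x) *
    (1 / 2 - Real.sqrt (Hinv (Real.log 2 - x) * (1 - Hinv (Real.log 2 - x))))

/-!
Replace `f` by `g = |f|`, which only decreases the left side. With `G ν = 2√(ν(1-ν))`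
(`affinity`) and `corr g x = ∑_{y ∼ x} g x g y`, the left side is `2n E[g²] - 2 E[corr g]`.
Splitting the cube along one coordinate, Cauchy–Schwarz on the cross term and the concavity of
`log` show that whenever `log 2 + B G ν ≤ A + H ν` on `[0, 1]`,
`B E[corr g] + E[g²] log (E[g²] / (E g)²) ≤ n A E[g²]`.
Take for `(A, B)` the tangent at `t = H⁻¹(log 2 - ρ)` to the curve `ν ↦ (G ν, H ν)`: it lies
below the curve because `H' / G'` increases on `(0, 1/2)`. This gives
`E[corr g] ≤ n G(t) E[g²]`, which is the claim.
-/

open Real Set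

noncomputable def affinity (x : ℝ) : ℝ := 2 * √(x * (1 - x))

-- `H'(t) / G'(t)`: the slope of the curve `ν ↦ (affinity ν, binEntropy ν)` at `t`.
noncomputable def entropySlope (t : ℝ) : ℝ :=
  √(t * (1 - t)) * (log (1 - t) - log t) / (1 - 2 * t)

lemma affinity_one_sub (x : ℝ) : affinity (1 - x) = affinity x := by
  rw [affinity, affinity, sub_sub_cancel, mul_comm (1 - x)]

lemma hasDerivAt_affinity {x : ℝ} (h0 : 0 < x) (h1 : x < 1) :
    HasDerivAt affinity ((1 - 2 * x) / √(x * (1 - x))) x := by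
  have hx : 0 < x * (1 - x) := mul_pos h0 (by linarith)
  have hq : HasDerivAt (fun y => y * (1 - y)) (1 - 2 * x) x :=
    ((hasDerivAt_id' x).mul ((hasDerivAt_id' x).const_sub 1)).congr_deriv (by ring)
  refine ((hq.sqrt hx.ne').const_mul 2).congr_deriv ?_
  field_simp

lemma two_mul_le_log_sub_log {c : ℝ} (h0 : 0 ≤ c) (h1 : c < 1) :
    2 * c ≤ log (1 + c) - log (1 - c) := by
  have hs := hasSum_log_sub_log_of_abs_lt_one (by rwa [abs_of_nonneg h0])
  simpa using le_hasSum hs 0 (fun k _ => by positivity)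

lemma entropySlope_eq {t : ℝ} (h0 : 0 < t) (h1 : t < 1 / 2) :
    entropySlope t = √(1 - (1 - 2 * t) ^ 2) * (log (1 + (1 - 2 * t)) - log (1 - (1 - 2 * t))) /
      (2 * (1 - 2 * t)) := by
  have hroot : √(1 - (1 - 2 * t) ^ 2) = 2 * √(t * (1 - t)) := by
    rw [show 1 - (1 - 2 * t) ^ 2 = 2 ^ 2 * (t * (1 - t)) by ring, sqrt_mul (by norm_num),
      sqrt_sq (by norm_num)]
  rw [entropySlope, hroot, show 1 + (1 - 2 * t) = 2 * (1 - t) by ring,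
    show 1 - (1 - 2 * t) = 2 * t by ring, log_mul two_ne_zero (by linarith),
    log_mul two_ne_zero h0.ne']
  field_simp
  ring

lemma antitoneOn_sqrt_one_sub_sq_mul_log_div :
    AntitoneOn (fun c => √(1 - c ^ 2) * (log (1 + c) - log (1 - c)) / (2 * c)) (Ioo 0 1) := by
  have hderiv : ∀ c ∈ Ioo (0 : ℝ) 1,
      HasDerivAt (fun c => √(1 - c ^ 2) * (log (1 + c) - log (1 - c)) / (2 * c))
        ((2 * c - (log (1 + c) - log (1 - c))) / (2 * c ^ 2 * √(1 - c ^ 2))) c := by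
    rintro c ⟨h0, h1⟩
    have hs : 0 < 1 - c ^ 2 := by nlinarith
    have hroot := sq_sqrt hs.le
    have dS : HasDerivAt (fun y => √(1 - y ^ 2)) (-c / √(1 - c ^ 2)) c := by
      convert ((hasDerivAt_pow 2 c).const_sub 1).sqrt hs.ne' using 1; field_simp; ring
    have dL : HasDerivAt (fun y => log (1 + y) - log (1 - y)) (2 / (1 - c ^ 2)) c := by
      refine ((((hasDerivAt_id' c).const_add 1).log (by linarith)).sub
        (((hasDerivAt_id' c).const_sub 1).log (by linarith))).congr_deriv ?_
      field_simp; ring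
    refine ((dS.mul dL).div ((hasDerivAt_id' c).const_mul 2) (by positivity)).congr_deriv ?_
    field_simp
    simp only [Pi.mul_apply]
    linear_combination (2 * c - (1 - c ^ 2) * (log (1 + c) - log (1 - c))) * hroot
  refine antitoneOn_of_hasDerivWithinAt_nonpos (convex_Ioo 0 1)
    (fun c hc => (hderiv c hc).continuousAt.continuousWithinAt)
    (fun c hc => (hderiv c (by simpa using hc)).hasDerivWithinAt) ?_
  rintro c hc
  rw [interior_Ioo] at hc
  have := two_mul_le_log_sub_log hc.1.le hc.2
  exact div_nonpos_of_nonpos_of_nonneg (by linarith) (by positivity)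

lemma entropySlope_monotoneOn : MonotoneOn entropySlope (Ioo 0 (1 / 2)) := by
  rintro x ⟨hx0, hx1⟩ y ⟨hy0, hy1⟩ hxy
  rw [entropySlope_eq hx0 hx1, entropySlope_eq hy0 hy1]
  exact antitoneOn_sqrt_one_sub_sq_mul_log_div ⟨by linarith, by linarith⟩
    ⟨by linarith, by linarith⟩ (by linarith)

lemma entropySlope_pos {t : ℝ} (h0 : 0 < t) (h1 : t < 1 / 2) : 0 < entropySlope t := by
  have : log t < log (1 - t) := log_lt_log h0 (by linarith)
  have : 0 < t * (1 - t) := mul_pos h0 (by linarith)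
  unfold entropySlope
  apply div_pos (mul_pos (sqrt_pos.mpr this) (by linarith)) (by linarith)

lemma log_one_sub_sub_log_eq {x : ℝ} (h0 : 0 < x) (h1 : x < 1 / 2) :
    log (1 - x) - log x = entropySlope x * ((1 - 2 * x) / √(x * (1 - x))) := by
  have : 0 < x * (1 - x) := mul_pos h0 (by linarith)
  unfold entropySlope
  field_simp
  rw [mul_div_assoc, div_self (by linarith), mul_one]

lemma entropySlope_mul_affinity_sub_le {t ν : ℝ} (ht0 : 0 < t) (ht1 : t < 1 / 2)
    (hν0 : 0 ≤ ν) (hν1 : ν ≤ 1) :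
    entropySlope t * (affinity ν - affinity t) ≤ binEntropy ν - binEntropy t := by
  set F := fun x => binEntropy x - entropySlope t * affinity x
  set F' := fun x => (entropySlope x - entropySlope t) * ((1 - 2 * x) / √(x * (1 - x)))
  have hF : Continuous F := by unfold F affinity; fun_prop
  have hF' : ∀ x ∈ Ioo (0 : ℝ) (1 / 2), HasDerivAt F (F' x) x := by
    rintro x ⟨h0, h1⟩
    refine ((hasDerivAt_binEntropy h0.ne' (by linarith)).sub
      ((hasDerivAt_affinity h0 (by linarith)).const_mul _)).congr_deriv ?_
    rw [log_one_sub_sub_log_eq h0 h1]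
    ring
  have hsign : ∀ x ∈ Ioo (0 : ℝ) (1 / 2), 0 ≤ (1 - 2 * x) / √(x * (1 - x)) :=
    fun x hx => div_nonneg (by linarith [hx.2]) (sqrt_nonneg _)
  suffices hmin : ∀ x ∈ Icc (0 : ℝ) (1 / 2), F t ≤ F x by
    rcases le_total ν (1 / 2) with h | h
    · have := hmin ν ⟨hν0, h⟩
      simp only [F] at this
      linarith
    · have := hmin (1 - ν) ⟨by linarith, by linarith⟩
      simp only [F, binEntropy_one_sub, affinity_one_sub] at this
      linarith
  rintro x ⟨hx0, hx1⟩
  rcases le_total x t with hxt | htx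
  · refine antitoneOn_of_hasDerivWithinAt_nonpos (f' := F') (convex_Icc 0 t) hF.continuousOn
      (fun y hy => ?_) (fun y hy => ?_) ⟨hx0, hxt⟩ ⟨ht0.le, le_rfl⟩ hxt
    all_goals rw [interior_Icc] at hy
    · exact (hF' y ⟨hy.1, by linarith [hy.2]⟩).hasDerivWithinAt
    · exact mul_nonpos_of_nonpos_of_nonneg
        (sub_nonpos.mpr (entropySlope_monotoneOn ⟨hy.1, by linarith [hy.2]⟩ ⟨ht0, ht1⟩ hy.2.le))
        (hsign y ⟨hy.1, by linarith [hy.2]⟩)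
  · refine monotoneOn_of_hasDerivWithinAt_nonneg (f' := F') (convex_Icc t (1 / 2)) hF.continuousOn
      (fun y hy => ?_) (fun y hy => ?_) ⟨le_rfl, ht1.le⟩ ⟨htx, hx1⟩ htx
    all_goals rw [interior_Icc] at hy
    · exact (hF' y ⟨ht0.trans hy.1, hy.2⟩).hasDerivWithinAt
    · exact mul_nonneg
        (sub_nonneg.mpr (entropySlope_monotoneOn ⟨ht0, ht1⟩ ⟨ht0.trans hy.1, hy.2⟩ hy.1.le))
        (hsign y ⟨ht0.trans hy.1, hy.2⟩)

lemma mul_log_add_mul_log_add_binEntropy_le {p a b : ℝ} (hp0 : 0 ≤ p) (hp1 : p ≤ 1)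
    (ha : 0 ≤ a) (hb : 0 ≤ b) (hpa : 0 < p → 0 < a) (hpb : p < 1 → 0 < b) :
    p * log a + (1 - p) * log b + binEntropy p ≤ log (a + b) := by
  rcases hp0.eq_or_lt with rfl | hp0
  · simpa using log_le_log (hpb one_pos) (by linarith)
  rcases hp1.eq_or_lt with rfl | hp1
  · simpa using log_le_log (hpa one_pos) (by linarith)
  have ha := hpa hp0
  have hb := hpb hp1
  have hq : 0 < 1 - p := sub_pos.2 hp1
  have h := strictConcaveOn_log_Ioi.concaveOn.2 (mem_Ioi.2 (div_pos ha hp0))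
    (mem_Ioi.2 (div_pos hb hq)) hp0.le hq.le (by ring)
  rw [smul_eq_mul, smul_eq_mul, smul_eq_mul, smul_eq_mul, mul_div_cancel₀ _ hp0.ne',
    mul_div_cancel₀ _ hq.ne', log_div ha.ne' hp0.ne', log_div hb.ne' hq.ne'] at h
  rw [binEntropy_eq_negMulLog_add_negMulLog_one_sub, negMulLog, negMulLog]
  linarith

lemma mul_log_div_sq {q e : ℝ} (h : e = 0 → q = 0) :
    q * log (q / e ^ 2) = q * log q - 2 * (q * log e) := by
  by_cases hq : q = 0
  · simp [hq]
  have he : e ≠ 0 := fun he => hq (h he)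
  rw [log_div hq (pow_ne_zero 2 he), log_pow]
  push_cast
  ring

lemma two_point_bound {A B e₁ e₀ q₁ q₀ m : ℝ} (hB : 0 ≤ B)
    (hAB : ∀ ν ∈ Icc (0 : ℝ) 1, log 2 + B * affinity ν ≤ A + binEntropy ν)
    (he₁ : 0 ≤ e₁) (he₀ : 0 ≤ e₀) (hq₁ : 0 ≤ q₁) (hq₀ : 0 ≤ q₀)
    (hqe₁ : e₁ = 0 → q₁ = 0) (hqe₀ : e₀ = 0 → q₀ = 0) (hm : m ≤ √(q₁ * q₀)) :
    2 * B * m + (q₁ + q₀) * log ((q₁ + q₀) / 2 / ((e₁ + e₀) / 2) ^ 2) ≤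
      q₁ * log (q₁ / e₁ ^ 2) + q₀ * log (q₀ / e₀ ^ 2) + A * (q₁ + q₀) := by
  rcases (add_nonneg hq₁ hq₀).eq_or_lt with hq | hsum
  · obtain ⟨rfl, rfl⟩ : q₁ = 0 ∧ q₀ = 0 := ⟨by linarith, by linarith⟩
    have : m ≤ 0 := by simpa using hm
    simp only [add_zero, zero_div, log_zero, mul_zero]
    nlinarith
  have he : 0 < e₁ + e₀ := by
    by_contra! h
    linarith [hqe₁ (by linarith), hqe₀ (by linarith)]
  obtain ⟨ν, q, hq, rfl, rfl⟩ : ∃ ν q, 0 < q ∧ q₁ = ν * q ∧ q₀ = (1 - ν) * q :=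
    ⟨q₁ / (q₁ + q₀), q₁ + q₀, hsum, by field_simp, by field_simp; ring⟩
  clear hsum
  rw [show ν * q + (1 - ν) * q = q by ring]
  have hν0 : 0 ≤ ν := (mul_nonneg_iff_of_pos_right hq).mp hq₁
  have hν1 : ν ≤ 1 := by linarith [(mul_nonneg_iff_of_pos_right hq).mp hq₀]
  have hsplit : ν * q * log (ν * q / e₁ ^ 2) + (1 - ν) * q * log ((1 - ν) * q / e₀ ^ 2) =
      q * log q - q * binEntropy ν - 2 * q * (ν * log e₁ + (1 - ν) * log e₀) := by
    have h₁ := negMulLog_mul ν q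
    have h₀ := negMulLog_mul (1 - ν) q
    rw [mul_log_div_sq hqe₁, mul_log_div_sq hqe₀, binEntropy_eq_negMulLog_add_negMulLog_one_sub]
    simp only [negMulLog] at h₁ h₀ ⊢
    linear_combination -h₁ - h₀
  have hgibbs := mul_log_add_mul_log_add_binEntropy_le hν0 hν1 he₁ he₀
    (fun h => he₁.lt_of_ne fun h' => by nlinarith [hqe₁ h'.symm])
    (fun h => he₀.lt_of_ne fun h' => by nlinarith [hqe₀ h'.symm])
  have hm' : 2 * m ≤ q * affinity ν := by
    have : √(ν * q * ((1 - ν) * q)) = q * √(ν * (1 - ν)) := by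
      rw [show ν * q * ((1 - ν) * q) = q ^ 2 * (ν * (1 - ν)) by ring, sqrt_mul (sq_nonneg _),
        sqrt_sq hq.le]
    rw [affinity]; linarith
  have hlog : log (q / 2 / ((e₁ + e₀) / 2) ^ 2) = log 2 + log q - 2 * log (e₁ + e₀) := by
    rw [show q / 2 / ((e₁ + e₀) / 2) ^ 2 = 2 * q / (e₁ + e₀) ^ 2 by field_simp,
      log_div (by positivity) (by positivity), log_mul two_ne_zero hq.ne', log_pow]
    push_cast
    ring
  have h1 := mul_le_mul_of_nonneg_left (hAB ν ⟨hν0, hν1⟩) hq.le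
  have h2 := mul_le_mul_of_nonneg_left hgibbs hq.le
  have h3 := mul_le_mul_of_nonneg_left hm' hB
  rw [hsplit, hlog]
  linarith

noncomputable def cubeCorr (n : ℕ) (g : (Fin n → Bool) → ℝ) (x : Fin n → Bool) : ℝ :=
  ∑ i : Fin n, g x * g (Function.update x i (!x i))

lemma sum_mul_comp_le_sq_sum_sub_sum_sq {ι : Type*} [Fintype ι] {g : ι → ℝ} (hg : ∀ x, 0 ≤ g x)
    {σ : ι → ι} (hσ : ∀ x, σ x ≠ x) :
    ∑ x, g x * g (σ x) ≤ (∑ x, g x) ^ 2 - ∑ x, g x ^ 2 := by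
  classical
  have hpair (x : ι) : g x + g (σ x) ≤ ∑ y, g y := by
    rw [← Finset.sum_pair (hσ x).symm]
    exact Finset.sum_le_sum_of_subset_of_nonneg (Finset.subset_univ _) fun y _ _ => hg y
  rw [sq, Finset.sum_mul, le_sub_iff_add_le, ← Finset.sum_add_distrib]
  refine Finset.sum_le_sum fun x _ => ?_
  nlinarith [hpair x, hg x]

section Cube

variable {n : ℕ}

lemma cubeE_add (g h : (Fin n → Bool) → ℝ) :
    cubeE n (fun x => g x + h x) = cubeE n g + cubeE n h := by
  simp only [cubeE, Finset.sum_add_distrib, add_div]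

lemma cubeE_nonneg {g : (Fin n → Bool) → ℝ} (hg : ∀ x, 0 ≤ g x) : 0 ≤ cubeE n g :=
  div_nonneg (Finset.sum_nonneg fun x _ => hg x) (by positivity)

lemma cubeE_const (c : ℝ) : cubeE n (fun _ => c) = c := by
  simp [cubeE]

lemma cubeE_zero (g : (Fin 0 → Bool) → ℝ) (x : Fin 0 → Bool) : cubeE 0 g = g x := by
  rw [cubeE, Fintype.sum_subsingleton _ x, pow_zero, div_one]

lemma cubeE_succ (g : (Fin (n + 1) → Bool) → ℝ) :
    cubeE (n + 1) g =
      (cubeE n (fun z => g (Fin.cons true z)) + cubeE n (fun z => g (Fin.cons false z))) / 2 := by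
  simp only [cubeE, ← (Fin.consEquiv fun _ => Bool).sum_comp g, Fintype.sum_prod_type,
    Fintype.sum_bool]
  simp only [Fin.consEquiv, Equiv.coe_fn_mk]
  ring

lemma update_not_involutive (i : Fin n) :
    Function.Involutive fun x : Fin n → Bool => Function.update x i (!x i) := by
  intro x
  simp

lemma sq_cubeE_mul_le (g h : (Fin n → Bool) → ℝ) :
    cubeE n (fun x => g x * h x) ^ 2 ≤ cubeE n (fun x => g x ^ 2) * cubeE n (fun x => h x ^ 2) := by
  simp only [cubeE, div_pow, div_mul_div_comm, ← sq]
  gcongr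
  exact Finset.sum_mul_sq_le_sq_mul_sq _ g h

lemma sq_cubeE_le (g : (Fin n → Bool) → ℝ) : cubeE n g ^ 2 ≤ cubeE n (fun x => g x ^ 2) := by
  simpa [cubeE_const] using sq_cubeE_mul_le g (fun _ => 1)

lemma cubeE_sq_le {g : (Fin n → Bool) → ℝ} (hg : ∀ x, 0 ≤ g x) :
    cubeE n (fun x => g x ^ 2) ≤ 2 ^ n * cubeE n g ^ 2 := by
  simp only [cubeE, div_pow]
  rw [mul_div_assoc', pow_two (2 ^ n : ℝ), mul_div_mul_left _ _ (by positivity)]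
  gcongr
  exact Finset.sum_sq_le_sq_sum_of_nonneg fun x _ => hg x

lemma cubeCorr_cons (g : (Fin (n + 1) → Bool) → ℝ) (b : Bool) (z : Fin n → Bool) :
    cubeCorr (n + 1) g (Fin.cons b z) =
      g (Fin.cons b z) * g (Fin.cons (!b) z) + cubeCorr n (fun z => g (Fin.cons b z)) z := by
  simp only [cubeCorr, Fin.sum_univ_succ, Fin.cons_zero, Fin.cons_succ, Fin.update_cons_zero,
    ← Fin.cons_update]

lemma cubeE_cubeCorr_succ (g : (Fin (n + 1) → Bool) → ℝ) :
    cubeE (n + 1) (cubeCorr (n + 1) g) =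
      (cubeE n (cubeCorr n fun z => g (Fin.cons true z)) +
          cubeE n (cubeCorr n fun z => g (Fin.cons false z))) / 2 +
        cubeE n (fun z => g (Fin.cons true z) * g (Fin.cons false z)) := by
  simp only [cubeE_succ, cubeCorr_cons, Bool.not_true, Bool.not_false, cubeE_add,
    mul_comm (g (Fin.cons false _))]
  ring

lemma cubeD2_eq (g : (Fin n → Bool) → ℝ) :
    cubeD2 n g = 2 * n * cubeE n (fun x => g x ^ 2) - 2 * cubeE n (cubeCorr n g) := by
  have hsq (i : Fin n) : ∑ x, g (Function.update x i (!x i)) ^ 2 = ∑ x, g x ^ 2 :=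
    (update_not_involutive i).bijective.sum_comp fun x => g x ^ 2
  simp only [cubeD2, cubeE, cubeCorr, sub_sq, Finset.sum_add_distrib, Finset.sum_sub_distrib]
  rw [Finset.sum_comm (f := fun x i => g (Function.update x i (!x i)) ^ 2)]
  simp only [hsq, Finset.sum_const, Finset.card_univ, Fintype.card_fin, nsmul_eq_mul,
    mul_assoc, ← Finset.mul_sum]
  ring

lemma cubeE_cubeCorr_le {g : (Fin n → Bool) → ℝ} (hg : ∀ x, 0 ≤ g x) :
    cubeE n (cubeCorr n g) ≤ n * (2 ^ n * cubeE n g ^ 2 - cubeE n (fun x => g x ^ 2)) := by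
  have hσ (i : Fin n) (x : Fin n → Bool) : Function.update x i (!x i) ≠ x := fun h => by
    simpa using congrFun h i
  have h := Finset.sum_le_sum fun i (_ : i ∈ Finset.univ) =>
    sum_mul_comp_le_sq_sum_sub_sum_sq hg (hσ i)
  simp only [cubeE, cubeCorr, Finset.sum_const, Finset.card_univ, Fintype.card_fin,
    nsmul_eq_mul] at h ⊢
  rw [Finset.sum_comm] at h
  rw [div_pow, mul_div_assoc', pow_two (2 ^ n : ℝ), mul_div_mul_left _ _ (by positivity),
    ← sub_div, mul_div_assoc']
  gcongr

lemma cubeD2_nonneg (f : (Fin n → Bool) → ℝ) : 0 ≤ cubeD2 n f :=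
  cubeE_nonneg fun _ => Finset.sum_nonneg fun _ _ => sq_nonneg _

lemma cubeD2_abs_le (f : (Fin n → Bool) → ℝ) : cubeD2 n (fun x => |f x|) ≤ cubeD2 n f := by
  unfold cubeD2 cubeE
  refine div_le_div_of_nonneg_right
    (Finset.sum_le_sum fun x _ => Finset.sum_le_sum fun i _ => ?_) (by positivity)
  exact sq_le_sq.mpr (abs_abs_sub_abs_le_abs_sub (f x) _)

end Cube

lemma mul_cubeE_cubeCorr_add_mul_log_le {A B : ℝ} (hB : 0 ≤ B)
    (hAB : ∀ ν ∈ Icc (0 : ℝ) 1, log 2 + B * affinity ν ≤ A + binEntropy ν) :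
    ∀ {n : ℕ} {g : (Fin n → Bool) → ℝ}, (∀ x, 0 ≤ g x) →
      B * cubeE n (cubeCorr n g) +
          cubeE n (fun x => g x ^ 2) * log (cubeE n (fun x => g x ^ 2) / cubeE n g ^ 2) ≤
        n * A * cubeE n (fun x => g x ^ 2)
  | 0, g, _ => by
    simp [cubeE_zero _ default, cubeCorr]
  | n + 1, g, hg => by
    set g₁ := fun z => g (Fin.cons true z)
    set g₀ := fun z => g (Fin.cons false z)
    have hzero {h : (Fin n → Bool) → ℝ} (hh : ∀ x, 0 ≤ h x) (h0 : cubeE n h = 0) :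
        cubeE n (fun x => h x ^ 2) = 0 :=
      le_antisymm (by simpa [h0] using cubeE_sq_le hh) (cubeE_nonneg fun _ => sq_nonneg _)
    have hm : cubeE n (fun z => g₁ z * g₀ z) ≤
        √(cubeE n (fun z => g₁ z ^ 2) * cubeE n (fun z => g₀ z ^ 2)) :=
      (le_abs_self _).trans (abs_le_sqrt (sq_cubeE_mul_le g₁ g₀))
    have h₁ := mul_cubeE_cubeCorr_add_mul_log_le hB hAB (g := g₁) fun _ => hg _
    have h₀ := mul_cubeE_cubeCorr_add_mul_log_le hB hAB (g := g₀) fun _ => hg _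
    have hstep := two_point_bound hB hAB (cubeE_nonneg fun _ => hg _)
      (cubeE_nonneg fun _ => hg _) (cubeE_nonneg fun _ => sq_nonneg _)
      (cubeE_nonneg fun _ => sq_nonneg _) (hzero fun _ => hg _) (hzero fun _ => hg _) hm
    rw [cubeE_cubeCorr_succ, cubeE_succ (fun x => g x ^ 2), cubeE_succ g]
    push_cast
    linarith

lemma cubeE_cubeCorr_le_of_log_eq {n : ℕ} {g : (Fin n → Bool) → ℝ} (hg : ∀ x, 0 ≤ g x)
    (hE : 0 < cubeE n g) {t : ℝ} (ht0 : 0 ≤ t) (ht1 : t < 1 / 2)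
    (hlog : log (cubeE n (fun x => g x ^ 2) / cubeE n g ^ 2) = n * (log 2 - binEntropy t)) :
    cubeE n (cubeCorr n g) ≤ n * affinity t * cubeE n (fun x => g x ^ 2) := by
  rcases ht0.eq_or_lt with rfl | ht0
  -- At `t = 0` the tangent is vertical; instead `E[g²] = 2^n (E g)²` forces `E[corr g] = 0`.
  · have hpos : 0 < cubeE n (fun x => g x ^ 2) / cubeE n g ^ 2 :=
      div_pos ((pow_pos hE 2).trans_le (sq_cubeE_le g)) (pow_pos hE 2)
    have hq : cubeE n (fun x => g x ^ 2) = 2 ^ n * cubeE n g ^ 2 := by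
      rw [binEntropy_zero, sub_zero, ← log_pow] at hlog
      have := log_injOn_pos hpos (by positivity : (0 : ℝ) < 2 ^ n) hlog
      field_simp at this
      linarith
    simpa [affinity, hq] using cubeE_cubeCorr_le hg
  set B := entropySlope t
  have hB := entropySlope_pos ht0 ht1
  have h := mul_cubeE_cubeCorr_add_mul_log_le (A := log 2 + B * affinity t - binEntropy t) hB.le
    (fun ν hν => by linarith [entropySlope_mul_affinity_sub_le ht0 ht1 hν.1 hν.2]) hg
  rw [hlog] at h
  refine le_of_mul_le_mul_left ?_ hB
  linarith

lemma log_cubeE_sq_div_sq_mem_Icc {n : ℕ} {g : (Fin n → Bool) → ℝ} (hg : ∀ x, 0 ≤ g x)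
    (hE : 0 < cubeE n g) :
    log (cubeE n (fun x => g x ^ 2) / cubeE n g ^ 2) ∈ Icc 0 (n * log 2) := by
  have hE2 := pow_pos hE 2
  refine ⟨log_nonneg ((one_le_div hE2).mpr (sq_cubeE_le g)), ?_⟩
  rw [← log_pow]
  exact log_le_log (div_pos (hE2.trans_le (sq_cubeE_le g)) hE2)
    ((div_le_iff₀ hE2).mpr (cubeE_sq_le hg))

lemma binEntropy_eq_neg_mul_log_sub (p : ℝ) :
    binEntropy p = -p * log p - (1 - p) * log (1 - p) := by
  rw [binEntropy_eq_negMulLog_add_negMulLog_one_sub, negMulLog, negMulLog]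
  ring

theorem modified_functional_isoperimetry_general (n : ℕ)
    (f : (Fin n → Bool) → ℝ)
    (Hinv : ℝ → ℝ)
    (hHinv : ∀ y ∈ Set.Icc (0 : ℝ) (Real.log 2),
      Hinv y ∈ Set.Icc (0 : ℝ) (1 / 2) ∧
        -(Hinv y) * Real.log (Hinv y) - (1 - Hinv y) * Real.log (1 - Hinv y) = y) :
    cubeD2 n f ≥
      Cfun Hinv
          (Real.log (cubeE n (fun x => f x ^ 2) / (cubeE n (fun x => |f x|)) ^ 2) / n) *
        (cubeE n (fun x => f x ^ 2) *
          Real.log (cubeE n (fun x => f x ^ 2) / (cubeE n (fun x => |f x|)) ^ 2)) := by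
  set g := fun x => |f x|
  have hg (x : Fin n → Bool) : 0 ≤ g x := abs_nonneg _
  rw [show cubeE n (fun x => f x ^ 2) = cubeE n (fun x => g x ^ 2) by simp [g, sq_abs]]
  set L := log (cubeE n (fun x => g x ^ 2) / cubeE n g ^ 2) with hL
  rcases eq_or_ne L 0 with hL0 | hL0
  · rw [hL0, mul_zero, mul_zero]
    exact cubeD2_nonneg f
  -- `E g = 0` would make `L = log (_ / 0) = 0`.
  have hE : 0 < cubeE n g :=
    (cubeE_nonneg hg).lt_of_ne fun h => hL0 (by simp [hL, ← h])
  obtain ⟨hL_nonneg, hL_le⟩ := log_cubeE_sq_div_sq_mem_Icc hg hE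
  have hn : (0 : ℝ) < n := Nat.cast_pos.mpr (Nat.pos_of_ne_zero fun h =>
    hL0 (le_antisymm (by simpa [h] using hL_le) hL_nonneg))
  have hρ : 0 < L / n := div_pos (hL_nonneg.lt_of_ne' hL0) hn
  obtain ⟨⟨ht0, ht1⟩, hHt⟩ := hHinv (log 2 - L / n)
    ⟨by linarith [(div_le_iff₀ hn).mpr (by linarith : L ≤ log 2 * n)], by linarith⟩
  rw [ge_iff_le, Cfun, if_neg hρ.ne']
  set t := Hinv (log 2 - L / n)
  clear_value t
  rw [← binEntropy_eq_neg_mul_log_sub] at hHt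
  have ht1 : t < 1 / 2 := ht1.lt_of_ne fun h => by
    rw [h, one_div, binEntropy_two_inv] at hHt
    linarith
  have key := cubeE_cubeCorr_le_of_log_eq hg hE ht0 ht1 (by rw [hHt, ← hL]; field_simp; ring)
  calc _ = 2 * n * cubeE n (fun x => g x ^ 2) * (1 - affinity t) := by
        unfold affinity; field_simp; ring
    _ ≤ cubeD2 n g := by rw [cubeD2_eq]; nlinarith
    _ ≤ cubeD2 n f := cubeD2_abs_le f

/-- **Modified functional edge-isoperimetric inequality** on the Hamming cube:
for nonzero `f : {0,1}^n → ℝ` and `ρ = (1/n)·log(E[f²]/(E|f|)²)`,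
`E_x ∑_{y∼x} (f x − f y)² ≥ C(ρ)·E[f²]·log(E[f²]/(E|f|)²)`. -/
theorem modified_functional_isoperimetry (n : ℕ) (hn : 1 ≤ n)
    (f : (Fin n → Bool) → ℝ) (hf : f ≠ 0)
    (Hinv : ℝ → ℝ)
    (hHinv : ∀ y ∈ Set.Icc (0 : ℝ) (Real.log 2),
      Hinv y ∈ Set.Icc (0 : ℝ) (1 / 2) ∧
        -(Hinv y) * Real.log (Hinv y) - (1 - Hinv y) * Real.log (1 - Hinv y) = y) :
    cubeD2 n f ≥
      Cfun Hinv
          (Real.log (cubeE n (fun x => f x ^ 2) / (cubeE n (fun x => |f x|)) ^ 2) / n) *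
        (cubeE n (fun x => f x ^ 2) *
          Real.log (cubeE n (fun x => f x ^ 2) / (cubeE n (fun x => |f x|)) ^ 2)) :=
  modified_functional_isoperimetry_general n f Hinv hHinv
end

section
/- For every t ∈ [0,1), t³ · log((1+t²)/(1−t²)) + (1−t⁴) · log((1+t)/(1−t)) ≥ 2t. -/
/-! For `0 ≤ x < 1` the series `log ((1 + x) / (1 - x)) = 2 ∑ x ^ (2k+1) / (2k+1)` has
nonnegative terms, so the logarithm is at least its first term `2x`. Using this at `x = t²`
and `x = t`, with the nonnegative weights `t³` and `1 - t⁴`, bounds the left side below by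
`t³ · 2t² + (1 - t⁴) · 2t = 2t`. -/

open Real

lemma two_mul_le_log_div_of_nonneg_of_lt_one {x : ℝ} (hx₀ : 0 ≤ x) (hx₁ : x < 1) :
    2 * x ≤ log ((1 + x) / (1 - x)) := by
  have hsum := hasSum_log_sub_log_of_abs_lt_one (abs_lt.mpr ⟨by linarith, hx₁⟩)
  rw [← log_div (by linarith) (by linarith)] at hsum
  simpa using le_hasSum hsum 0 fun k _ => by positivity

/-- For every `t ∈ [0,1)`,
`t³ log((1+t²)/(1−t²)) + (1−t⁴) log((1+t)/(1−t)) ≥ 2t`. -/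
theorem log_combination_ge_two_mul :
    ∀ t ∈ Set.Ico (0 : ℝ) 1,
      t ^ 3 * Real.log ((1 + t ^ 2) / (1 - t ^ 2)) +
          (1 - t ^ 4) * Real.log ((1 + t) / (1 - t)) ≥ 2 * t := by
  rintro t ⟨ht₀, ht₁⟩
  have hsq : 2 * t ^ 2 ≤ log ((1 + t ^ 2) / (1 - t ^ 2)) :=
    two_mul_le_log_div_of_nonneg_of_lt_one (by positivity) (by nlinarith)
  have hlin : 2 * t ≤ log ((1 + t) / (1 - t)) :=
    two_mul_le_log_div_of_nonneg_of_lt_one ht₀ ht₁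
  have ht₄ : 0 ≤ 1 - t ^ 4 := by nlinarith [pow_le_one₀ (n := 4) ht₀ ht₁.le]
  calc 2 * t = t ^ 3 * (2 * t ^ 2) + (1 - t ^ 4) * (2 * t) := by ring
    _ ≤ _ := by gcongr
end

section
/- For every x ∈ (0,1), (3−x²)(1+x²)·L₁(x)·L₂(x) + 2x(1+x²)·L₂(x) > 2x(1−x²)·L₁(x)² + 4x·L₂(x)² + 4x²·L₁(x), where L₁(x) = log((1+x)/(1−x)) and L₂(x) = log((1+x²)/(1−x²)). -/
/-!
Put `u = artanh x` and `v = artanh x²`, so that `L₁ = 2u`, `L₂ = 2v` and the difference of the two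
sides is `4 · artanhForm x u v`. This form is concave in `u` and in `v` separately. For `x ≤ 4/5` it
therefore suffices to check it at the corners of the box cut out by the Taylor bounds
`t + t³/3 ≤ artanh t ≤ t + t³/3 + 5t⁵/9`; there it is `x⁷` times a polynomial in `x²` that is
positive on `[0, 16/25]`. For `x ≥ 4/5` we use
`(1 + x²) · artanhForm x u v = (2xu − (1+x²)v)(4xv − (1−x⁴)u − x(1+x²)) + 2(1−x²)²uv`:
the first factor is positive for every `x` because `log ((1+x)²/(1+x²)) ≥ 2x/(1+x)²`, and the second
is nonnegative for `x ≥ 4/5` by the Taylor bounds.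
-/

open Real Finset

theorem hasSum_artanh {x : ℝ} (hx : |x| < 1) :
    HasSum (fun k : ℕ => x ^ (2 * k + 1) / (2 * k + 1)) (artanh x) := by
  have hx' := abs_lt.mp hx
  rw [artanh_eq_half_log ⟨hx'.1.le, hx'.2.le⟩, log_div (by linarith) (by linarith)]
  have hterm (k : ℕ) : x ^ (2 * k + 1) / (2 * k + 1) =
      1 / 2 * (2 * (1 / (2 * k + 1)) * x ^ (2 * k + 1)) := by ring
  simpa only [hterm] using (hasSum_log_sub_log_of_abs_lt_one hx).mul_left (1 / 2)

theorem sum_range_le_artanh (n : ℕ) {x : ℝ} (hx₀ : 0 ≤ x) (hx₁ : x < 1) :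
    ∑ k ∈ range n, x ^ (2 * k + 1) / (2 * k + 1) ≤ artanh x :=
  sum_le_hasSum _ (fun _ _ => by positivity) (hasSum_artanh (by rwa [abs_of_nonneg hx₀]))

theorem artanh_le_sum_range_add (n : ℕ) {x : ℝ} (hx₀ : 0 ≤ x) (hx₁ : x < 1) :
    artanh x ≤ ∑ k ∈ range n, x ^ (2 * k + 1) / (2 * k + 1) +
      x ^ (2 * n + 1) / ((2 * n + 1) * (1 - x ^ 2)) := by
  have htail := (hasSum_nat_add_iff' n).mpr (hasSum_artanh (by rwa [abs_of_nonneg hx₀]))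
  have hgeom := (hasSum_geometric_of_lt_one (sq_nonneg x) (by nlinarith)).mul_left
    (x ^ (2 * n + 1) / (2 * n + 1))
  have := hasSum_le (fun k => ?_) htail hgeom
  · rw [← div_div, div_eq_mul_inv (_ / _)]
    linarith
  · rw [← pow_mul, div_mul_eq_mul_div, ← pow_add, show 2 * n + 1 + 2 * k = 2 * (k + n) + 1 by ring]
    gcongr
    linarith

theorem artanh_mem_Icc_of_le_four_fifths {t : ℝ} (ht₀ : 0 ≤ t) (ht : t ≤ 4 / 5) :
    artanh t ∈ Set.Icc (t + t ^ 3 / 3) (t + t ^ 3 / 3 + 5 * t ^ 5 / 9) := by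
  have ht₁ : t < 1 := by linarith
  have hlower := sum_range_le_artanh 2 ht₀ ht₁
  have hupper := artanh_le_sum_range_add 2 ht₀ ht₁
  norm_num [sum_range_succ] at hlower hupper
  refine ⟨by linarith, hupper.trans ?_⟩
  have htail : t ^ 5 / (5 * (1 - t ^ 2)) ≤ 5 * t ^ 5 / 9 := by
    rw [div_le_iff₀ (by nlinarith)]
    nlinarith [mul_nonneg (pow_nonneg ht₀ 5) (by nlinarith : (0 : ℝ) ≤ 16 - 25 * t ^ 2)]
  linarith

theorem div_one_add_sq_le_artanh_sub_artanh_sq {x : ℝ} (hx₀ : 0 ≤ x) (hx₁ : x < 1) :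
    x / (1 + x) ^ 2 ≤ artanh x - artanh (x ^ 2) := by
  have hx₂ : x ^ 2 < 1 := by nlinarith
  rw [artanh_eq_half_log ⟨by linarith, hx₁.le⟩, artanh_eq_half_log ⟨by nlinarith, hx₂.le⟩,
    ← mul_sub, ← log_div (by positivity) (by positivity)]
  have hratio : (1 + x) / (1 - x) / ((1 + x ^ 2) / (1 - x ^ 2)) = (1 + x) ^ 2 / (1 + x ^ 2) := by
    have : 1 - x ≠ 0 := by linarith
    field_simp
    ring
  have hlog := one_sub_inv_le_log_of_pos (x := (1 + x) ^ 2 / (1 + x ^ 2)) (by positivity)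
  have hlhs : 1 - ((1 + x) ^ 2 / (1 + x ^ 2))⁻¹ = 2 * (x / (1 + x) ^ 2) := by
    field_simp
    ring
  rw [hratio]
  linarith

theorem one_add_sq_mul_artanh_sq_lt {x : ℝ} (hx₀ : 0 < x) (hx₁ : x < 1) :
    (1 + x ^ 2) * artanh (x ^ 2) < 2 * x * artanh x := by
  have hdiff := div_one_add_sq_le_artanh_sub_artanh_sq hx₀.le hx₁
  have hupper := artanh_le_sum_range_add 0 hx₀.le hx₁
  norm_num at hupper
  -- `2x·artanh x − (1+x²)·artanh x² = (1+x²)(artanh x − artanh x²) − (1−x)²·artanh x`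
  have hgap : (1 + x ^ 2) * (x / (1 + x) ^ 2) - (1 - x) ^ 2 * (x / (1 - x ^ 2)) =
      2 * x ^ 3 / (1 + x) ^ 2 := by
    have : 1 - x ≠ 0 := by linarith
    have : 1 - x ^ 2 = (1 - x) * (1 + x) := by ring
    rw [this]
    field_simp
    ring
  have h₁ : (1 + x ^ 2) * (x / (1 + x) ^ 2) ≤ (1 + x ^ 2) * (artanh x - artanh (x ^ 2)) := by
    gcongr
  have h₂ : (1 - x) ^ 2 * artanh x ≤ (1 - x) ^ 2 * (x / (1 - x ^ 2)) := by
    gcongr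
  have : 0 < 2 * x ^ 3 / (1 + x) ^ 2 := by positivity
  linarith

theorem one_sub_pow_four_mul_artanh_add_le {x : ℝ} (hx : 4 / 5 ≤ x) (hx₁ : x < 1) :
    (1 - x ^ 4) * artanh x + x * (1 + x ^ 2) ≤ 4 * x * artanh (x ^ 2) := by
  have hx₀ : 0 ≤ x := by linarith
  have hx₂ : 0 < 1 - x ^ 2 := by nlinarith
  have hlower := sum_range_le_artanh 2 (sq_nonneg x) (by nlinarith)
  have hupper := artanh_le_sum_range_add 2 hx₀ hx₁
  norm_num [sum_range_succ] at hlower hupper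
  have htail : (1 - x ^ 4) * (x ^ 5 / (5 * (1 - x ^ 2))) = (1 + x ^ 2) * x ^ 5 / 5 := by
    field_simp
    ring
  have h₁ : (1 - x ^ 4) * artanh x ≤ (1 - x ^ 4) * (x + x ^ 3 / 3) + (1 + x ^ 2) * x ^ 5 / 5 := by
    calc (1 - x ^ 4) * artanh x ≤ (1 - x ^ 4) * (x + x ^ 3 / 3 + x ^ 5 / (5 * (1 - x ^ 2))) :=
          mul_le_mul_of_nonneg_left hupper (by nlinarith)
      _ = _ := by rw [mul_add, htail]
  have h₂ : 4 * x * (x ^ 2 + (x ^ 2) ^ 3 / 3) ≤ 4 * x * artanh (x ^ 2) := by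
    gcongr
  have hpoly : (1 - x ^ 4) * (x + x ^ 3 / 3) + (1 + x ^ 2) * x ^ 5 / 5 + x * (1 + x ^ 2) ≤
      4 * x * (x ^ 2 + (x ^ 2) ^ 3 / 3) := by
    nlinarith [mul_nonneg hx₀ (by nlinarith : (0 : ℝ) ≤ x ^ 2 - 16 / 25), pow_nonneg hx₀ 5,
      pow_nonneg hx₀ 7]
  linarith

theorem pos_of_concave_quadratic {f : ℝ → ℝ} {a b c : ℝ} (hf : ∀ t, f t = a * t ^ 2 + b * t + c)
    (ha : a ≤ 0) {s t r : ℝ} (hst : s ≤ t) (htr : t ≤ r) (hs : 0 < f s) (hr : 0 < f r) :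
    0 < f t := by
  obtain rfl | hst := hst.eq_or_lt
  · exact hs
  rw [hf] at hs hr ⊢
  have hchord : (r - s) * (a * t ^ 2 + b * t + c) =
      (r - t) * (a * s ^ 2 + b * s + c) + (t - s) * (a * r ^ 2 + b * r + c) -
        a * (t - s) * (r - t) * (r - s) := by ring
  have : 0 < (r - s) * (a * t ^ 2 + b * t + c) := by
    rw [hchord]
    have := mul_nonneg (mul_nonneg (mul_nonneg (neg_nonneg.2 ha) (sub_pos.2 hst).le)
      (sub_nonneg.2 htr)) (sub_pos.2 (hst.trans_le htr)).le
    linarith [mul_nonneg (sub_nonneg.2 htr) hs.le, mul_pos (sub_pos.2 hst) hr]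
  exact pos_of_mul_pos_right this (by linarith)

def artanhForm (x u v : ℝ) : ℝ :=
  (3 - x ^ 2) * (1 + x ^ 2) * u * v + x * (1 + x ^ 2) * v - 2 * x * (1 - x ^ 2) * u ^ 2 -
    4 * x * v ^ 2 - 2 * x ^ 2 * u

theorem artanhForm_pos_of_corners {x u₀ u₁ v₀ v₁ u v : ℝ} (hx₀ : 0 ≤ x) (hx₁ : x ≤ 1)
    (hu : u ∈ Set.Icc u₀ u₁) (hv : v ∈ Set.Icc v₀ v₁)
    (hcorner : ∀ u' ∈ ({u₀, u₁} : Set ℝ), ∀ v' ∈ ({v₀, v₁} : Set ℝ), 0 < artanhForm x u' v') :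
    0 < artanhForm x u v := by
  have hu' (v' : ℝ) (hv' : v' ∈ ({v₀, v₁} : Set ℝ)) : 0 < artanhForm x u v' :=
    pos_of_concave_quadratic (f := fun u => artanhForm x u v') (a := -2 * x * (1 - x ^ 2))
      (b := (3 - x ^ 2) * (1 + x ^ 2) * v' - 2 * x ^ 2)
      (c := x * (1 + x ^ 2) * v' - 4 * x * v' ^ 2)
      (fun _ => by unfold artanhForm; ring) (by nlinarith) hu.1 hu.2
      (hcorner _ (by simp) _ hv') (hcorner _ (by simp) _ hv')
  exact pos_of_concave_quadratic (f := fun v => artanhForm x u v) (a := -4 * x)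
    (b := (3 - x ^ 2) * (1 + x ^ 2) * u + x * (1 + x ^ 2))
    (c := -2 * x * (1 - x ^ 2) * u ^ 2 - 2 * x ^ 2 * u)
    (fun _ => by unfold artanhForm; ring) (by linarith) hv.1 hv.2
    (hu' _ (by simp)) (hu' _ (by simp))

theorem artanhForm_corner_pos {x u v : ℝ} (hx₀ : 0 < x) (hx : x ≤ 4 / 5)
    (hu : u ∈ ({x + x ^ 3 / 3, x + x ^ 3 / 3 + 5 * x ^ 5 / 9} : Set ℝ))
    (hv : v ∈ ({x ^ 2 + (x ^ 2) ^ 3 / 3, x ^ 2 + (x ^ 2) ^ 3 / 3 + 5 * (x ^ 2) ^ 5 / 9} : Set ℝ)) :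
    0 < artanhForm x u v := by
  have hy : 0 ≤ 16 / 25 - x ^ 2 := by nlinarith
  -- at each corner the form is `x ^ 7` times a polynomial in `x ^ 2` whose degree-7 Bernstein
  -- coefficients on `[0, 16/25]` are all positive
  have hbasis (k : ℕ) : 0 ≤ x ^ 7 * (x ^ 2) ^ k * (16 / 25 - x ^ 2) ^ (7 - k) := by positivity
  have htop : 0 < x ^ 7 * (x ^ 2) ^ 7 := by positivity
  rcases hu with rfl | rfl <;> rcases hv with rfl | rfl <;>
  · unfold artanhForm
    linarith [hbasis 0, hbasis 1, hbasis 2, hbasis 3, hbasis 4, hbasis 5, hbasis 6]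

theorem artanhForm_pos_of_factors {x u v : ℝ} (hx₀ : 0 < x) (hx₁ : x < 1) (hu : 0 < u)
    (hv : 0 < v) (hP : (1 + x ^ 2) * v < 2 * x * u)
    (hG : (1 - x ^ 4) * u + x * (1 + x ^ 2) ≤ 4 * x * v) :
    0 < artanhForm x u v := by
  have hfactor : (1 + x ^ 2) * artanhForm x u v =
      (2 * x * u - (1 + x ^ 2) * v) * (4 * x * v - (1 - x ^ 4) * u - x * (1 + x ^ 2)) +
        2 * (1 - x ^ 2) ^ 2 * (u * v) := by
    unfold artanhForm; ring
  have : 0 < (1 + x ^ 2) * artanhForm x u v := by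
    rw [hfactor]
    have hx₂ : 0 < 1 - x ^ 2 := by nlinarith
    have := mul_nonneg (sub_pos.2 hP).le
      (by linarith : (0 : ℝ) ≤ 4 * x * v - (1 - x ^ 4) * u - x * (1 + x ^ 2))
    have := mul_pos (mul_pos two_pos (pow_pos hx₂ 2)) (mul_pos hu hv)
    linarith
  exact pos_of_mul_pos_right this (by positivity)

/-- For every `x ∈ (0,1)`, with `L₁(x) = log((1+x)/(1−x))` and
`L₂(x) = log((1+x²)/(1−x²))`,
`(3−x²)(1+x²)·L₁L₂ + 2x(1+x²)·L₂ > 2x(1−x²)·L₁² + 4x·L₂² + 4x²·L₁`. -/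
theorem log_ratio_inequality :
    ∀ x ∈ Set.Ioo (0 : ℝ) 1,
      (3 - x ^ 2) * (1 + x ^ 2) * Real.log ((1 + x) / (1 - x)) *
            Real.log ((1 + x ^ 2) / (1 - x ^ 2)) +
          2 * x * (1 + x ^ 2) * Real.log ((1 + x ^ 2) / (1 - x ^ 2)) >
        2 * x * (1 - x ^ 2) * Real.log ((1 + x) / (1 - x)) ^ 2 +
          4 * x * Real.log ((1 + x ^ 2) / (1 - x ^ 2)) ^ 2 +
          4 * x ^ 2 * Real.log ((1 + x) / (1 - x)) := by
  rintro x ⟨hx₀, hx₁⟩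
  have hx₂ : x ^ 2 < 1 := by nlinarith
  have hlog (t : ℝ) (ht₀ : 0 ≤ t) (ht₁ : t < 1) : log ((1 + t) / (1 - t)) = 2 * artanh t := by
    rw [artanh_eq_half_log ⟨by linarith, ht₁.le⟩]
    ring
  suffices 0 < artanhForm x (artanh x) (artanh (x ^ 2)) by
    rw [hlog x hx₀.le hx₁, hlog (x ^ 2) (by positivity) hx₂]
    unfold artanhForm at this
    linarith
  rcases le_or_gt x (4 / 5) with hx | hx
  · exact artanhForm_pos_of_corners hx₀.le hx₁.le (artanh_mem_Icc_of_le_four_fifths hx₀.le hx)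
      (artanh_mem_Icc_of_le_four_fifths (by positivity) (by nlinarith))
      fun u hu v hv => artanhForm_corner_pos hx₀ hx hu hv
  · exact artanhForm_pos_of_factors hx₀ hx₁ (artanh_pos ⟨hx₀, hx₁⟩)
      (artanh_pos ⟨by positivity, hx₂⟩) (one_add_sq_mul_artanh_sq_lt hx₀ hx₁)
      (one_sub_pow_four_mul_artanh_add_le hx.le hx₁)
end
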